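/- For every x ∈ (0, π/2) and every integer m ≥ 2, |2·(sin x / x) + (tan x)/x - (3 + (1/cos x)·Σ_{k=2}^{m} (-1)^{k} C(k) x^{2k})| < C(m+1) x^{2m+2} / cos x. -/

import Mathlib

open Real Finset

/-- The coefficient `C(k) = 2·(4^k - 3k - 1)/(2k+1)!`. -/
noncomputable def wchC (k : ℕ) : ℝ :=
  2 * ((4 : ℝ) ^ k - 3 * (k : ℝ) - 1) / (Nat.factorial (2 * k + 1) : ℝ)

/-!
Multiplying the error by `x cos x` turns it into the remainder, after the terms of degree at most
`2m + 1`, of the power series of `sin 2x + sin x - 3x cos x`, which is `∑ (-1)^k C(k) x^(2k+1)`.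
Since `C(k+1) ≤ C(k)/7` for `k ≥ 2` and `x² < 7`, the series is alternating with strictly
decreasing terms from `k = 2` on, so the remainder is smaller than its first term
`C(m+1) x^(2m+3)`.
-/

lemma fifteen_mul_add_two_le_two_mul_four_pow {n : ℕ} (hn : 2 ≤ n) :
    15 * (n : ℝ) + 2 ≤ 2 * 4 ^ n := by
  induction n, hn using Nat.le_induction with
  | base => norm_num
  | succ k hk ih =>
    have h16 : (16 : ℝ) ≤ 4 ^ k := by
      calc (16 : ℝ) = 4 ^ 2 := by norm_num
        _ ≤ 4 ^ k := pow_le_pow_right₀ (by norm_num) hk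
    push_cast
    rw [pow_succ]
    linarith

@[simp] lemma wchC_zero : wchC 0 = 0 := by norm_num [wchC]

@[simp] lemma wchC_one : wchC 1 = 0 := by norm_num [wchC]

lemma wchC_pos {n : ℕ} (hn : 2 ≤ n) : 0 < wchC n := by
  have h := fifteen_mul_add_two_le_two_mul_four_pow hn
  have hn' : (2 : ℝ) ≤ n := by exact_mod_cast hn
  unfold wchC
  apply div_pos _ (by positivity)
  linarith

lemma seven_mul_wchC_succ_le {n : ℕ} (hn : 2 ≤ n) : 7 * wchC (n + 1) ≤ wchC n := by
  have h := fifteen_mul_add_two_le_two_mul_four_pow hn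
  have hn' : (2 : ℝ) ≤ n := by exact_mod_cast hn
  have hfac : ((2 * (n + 1) + 1).factorial : ℝ)
      = ((2 * n + 3) * (2 * n + 2) : ℝ) * ((2 * n + 1).factorial : ℝ) := by
    rw [show 2 * (n + 1) + 1 = 2 * n + 1 + 1 + 1 by ring, Nat.factorial_succ, Nat.factorial_succ]
    push_cast
    ring
  have hf : (0 : ℝ) < ((2 * n + 1).factorial : ℝ) := by positivity
  have hpos : 0 < 4 ^ n - 3 * (n : ℝ) - 1 := by linarith
  have h42 : (42 : ℝ) ≤ (2 * n + 3) * (2 * n + 2) := by nlinarith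
  have hnum : 7 * (2 * (4 ^ (n + 1) - 3 * ((n : ℝ) + 1) - 1))
      ≤ 2 * (4 ^ n - 3 * n - 1) * ((2 * n + 3) * (2 * n + 2)) := by
    rw [pow_succ]
    nlinarith [mul_le_mul_of_nonneg_left h42 hpos.le]
  unfold wchC
  rw [hfac, mul_div_assoc', div_le_div_iff₀ (by positivity) hf]
  push_cast
  nlinarith

lemma wchC_succ_mul_pow_lt {n : ℕ} (hn : 2 ≤ n) {x : ℝ} (hx0 : 0 < x) (hx : x ^ 2 < 7) :
    wchC (n + 1) * x ^ (2 * (n + 1) + 1) < wchC n * x ^ (2 * n + 1) := by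
  have hC : wchC (n + 1) * x ^ 2 < wchC n := by
    nlinarith [seven_mul_wchC_succ_le hn, wchC_pos (show 2 ≤ n + 1 by omega)]
  calc wchC (n + 1) * x ^ (2 * (n + 1) + 1) = wchC (n + 1) * x ^ 2 * x ^ (2 * n + 1) := by ring
    _ < wchC n * x ^ (2 * n + 1) := by gcongr

lemma hasSum_wchC_mul_pow (x : ℝ) :
    HasSum (fun n : ℕ => (-1 : ℝ) ^ n * wchC n * x ^ (2 * n + 1))
      (sin (2 * x) + sin x - 3 * x * cos x) := by
  refine (((hasSum_sin (2 * x)).add (hasSum_sin x)).sub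
    ((hasSum_cos x).mul_left (3 * x))).congr_fun fun n => ?_
  have hfac : ((2 * n + 1).factorial : ℝ) = (2 * n + 1 : ℝ) * ((2 * n).factorial : ℝ) := by
    rw [Nat.factorial_succ]; push_cast; ring
  have h2x : (2 * x) ^ (2 * n + 1) = 2 * 4 ^ n * x ^ (2 * n + 1) := by
    rw [mul_pow, pow_succ, pow_mul]; ring
  have hf0 : ((2 * n).factorial : ℝ) ≠ 0 := by positivity
  unfold wchC
  rw [hfac, h2x]
  field_simp
  ring

lemma sum_range_wchC_mul_pow (x : ℝ) (m : ℕ) :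
    ∑ i ∈ range (m + 1), (-1 : ℝ) ^ i * wchC i * x ^ (2 * i + 1)
      = x * ∑ k ∈ Icc 2 m, (-1 : ℝ) ^ k * wchC k * x ^ (2 * k) := by
  rw [mul_sum, ← sum_subset (show Icc 2 m ⊆ range (m + 1) by
    intro i hi; simp only [mem_Icc, mem_range] at hi ⊢; omega)]
  · exact sum_congr rfl fun k _ => by ring
  · intro i hi hni
    simp only [mem_range, mem_Icc] at hi hni
    obtain rfl | rfl : i = 0 ∨ i = 1 := by omega
    all_goals simp

lemma HasSum.abs_lt_of_antitone {f : ℕ → ℝ} {l : ℝ} (hl : HasSum (fun i => (-1) ^ i * f i) l)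
    (hfa : Antitone f) (h21 : f 2 < f 1) : |l| < f 0 := by
  have lower := hfa.alternating_series_le_tendsto hl.tendsto_sum_nat 1
  have upper := hfa.tendsto_le_alternating_series hl.tendsto_sum_nat 1
  simp only [sum_range_succ, sum_range_zero] at lower upper
  norm_num at lower upper
  have h10 : f 1 ≤ f 0 := hfa zero_le_one
  rw [abs_lt]
  constructor <;> linarith

lemma abs_sin_two_mul_add_sin_sub_sub_sum_lt {x : ℝ} (hx0 : 0 < x) (hx : x ^ 2 < 7) {m : ℕ}
    (hm : 1 ≤ m) :
    |sin (2 * x) + sin x - 3 * x * cos x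
        - x * ∑ k ∈ Icc 2 m, (-1 : ℝ) ^ k * wchC k * x ^ (2 * k)|
      < wchC (m + 1) * x ^ (2 * (m + 1) + 1) := by
  set a : ℕ → ℝ := fun i => wchC (i + (m + 1)) * x ^ (2 * (i + (m + 1)) + 1)
  have hlt : ∀ i, a (i + 1) < a i := fun i => by
    simpa only [a, Nat.add_right_comm i 1] using
      wchC_succ_mul_pow_lt (show 2 ≤ i + (m + 1) by omega) hx0 hx
  have htail := (hasSum_nat_add_iff' (m + 1)).mpr (hasSum_wchC_mul_pow x)
  rw [sum_range_wchC_mul_pow] at htail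
  have halt : HasSum (fun i => (-1) ^ i * a i) ((-1) ^ (m + 1) *
      (sin (2 * x) + sin x - 3 * x * cos x
        - x * ∑ k ∈ Icc 2 m, (-1 : ℝ) ^ k * wchC k * x ^ (2 * k))) := by
    have hsq : ((-1 : ℝ) ^ (m + 1)) ^ 2 = 1 := by
      rw [← pow_mul]; exact Even.neg_one_pow ⟨m + 1, by ring⟩
    refine (htail.mul_left ((-1) ^ (m + 1))).congr_fun fun i => ?_
    simp only [a, pow_add (-1 : ℝ) i]
    linear_combination -(-1 : ℝ) ^ i * a i * hsq
  simpa [abs_mul, a] using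
    halt.abs_lt_of_antitone (antitone_nat_of_succ_le fun i => (hlt i).le) (hlt 1)

theorem two_sinx_div_x_add_tanx_div_x_error :
    ∀ x ∈ Set.Ioo (0 : ℝ) (π / 2), ∀ m : ℕ, 2 ≤ m →
      |2 * (Real.sin x / x) + Real.tan x / x
          - (3 + (1 / Real.cos x) *
              ∑ k ∈ Finset.Icc 2 m, (-1 : ℝ) ^ k * wchC k * x ^ (2 * k))|
        < wchC (m + 1) * x ^ (2 * m + 2) / Real.cos x := by
  rintro x ⟨hx0, hxπ⟩ m hm
  have hcos : 0 < cos x := cos_pos_of_mem_Ioo ⟨by linarith [pi_pos], hxπ⟩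
  have hx2 : x ^ 2 < 7 := by nlinarith [pi_lt_four]
  set S := ∑ k ∈ Icc 2 m, (-1 : ℝ) ^ k * wchC k * x ^ (2 * k)
  have hxc : 0 < x * cos x := mul_pos hx0 hcos
  have hE : 2 * (sin x / x) + tan x / x - (3 + 1 / cos x * S)
      = (sin (2 * x) + sin x - 3 * x * cos x - x * S) / (x * cos x) := by
    rw [sin_two_mul, tan_eq_sin_div_cos]
    field_simp
    ring
  have hbound : wchC (m + 1) * x ^ (2 * (m + 1) + 1) / (x * cos x)
      = wchC (m + 1) * x ^ (2 * m + 2) / cos x := by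
    field_simp
    ring
  rw [hE, abs_div, abs_of_pos hxc, ← hbound]
  exact div_lt_div_of_pos_right
    (abs_sin_two_mul_add_sin_sub_sub_sum_lt hx0 hx2 (by omega)) hxc
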